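/- For integers $m \geq 0$ define $k_m(t) = (-1)^{m+1}\,\frac{2\,\Gamma\!\left(m+\tfrac{5}{2}\right)}{\sqrt{\pi}\,\Gamma(m+1)}\,t\,P_m^{(0,3/2)}(2t^2-1)$, and set $k_{-1}(t) = 0$. Then for all integers $m \geq 0$ and all $t \in \mathbb{R}$, the differential-difference equation $$t\,(1-t^2)\,\frac{d}{dt}k_m(t) = \left(\frac{4m^2+4m+3}{4m+3} - (2m+1)\,t^2\right)k_m(t) - \frac{(2m+3)^2}{4m+3}\,k_{m-1}(t)$$ holds. -/

import Mathlib

open Real Filter Finset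

noncomputable def poch (a : ℝ) (k : ℕ) : ℝ := (ascPochhammer ℝ k).eval a

/-- Jacobi polynomial `P_k^{(α,β)}(x) = ((α+1)_k / k!) ₂F₁(-k, k+α+β+1; α+1; (1-x)/2)`. -/
noncomputable def jacobiP (k : ℕ) (α β : ℝ) (x : ℝ) : ℝ :=
  (poch (α + 1) k / (Nat.factorial k : ℝ)) *
    ∑ i ∈ Finset.range (k + 1),
      poch (-(k : ℝ)) i * poch ((k : ℝ) + α + β + 1) i /
        (poch (α + 1) i * (Nat.factorial i : ℝ)) * ((1 - x) / 2) ^ i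

/-- The kernel `k_m(t)` for the first derivative. -/
noncomputable def km (m : ℕ) (t : ℝ) : ℝ :=
  (-1:ℝ)^(m+1) * (2 * Real.Gamma ((m:ℝ) + 5/2) /
      (Real.sqrt Real.pi * Real.Gamma ((m:ℝ) + 1))) *
    t * jacobiP m 0 (3/2) (2*t^2 - 1)

/-- `k_m` extended to integer indices with `k_{-1} = 0`. -/
noncomputable def kmZ (m : ℤ) (t : ℝ) : ℝ := if m < 0 then 0 else km m.toNat t

/-!
Put `u = 1 - t²`. Then `k_m(t) = c_m t S_m(u)`, where
`S_m(u) = P_m^{(0,3/2)}(1 - 2u) = ∑ᵢ a_{m,i} uⁱ` with `a_{m,i} = (-m)ᵢ (m+5/2)ᵢ / i!²`.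
For `m ≥ 1` the equation reduces to the polynomial identity
`(4m+3)(u S_m - 2u(1-u) S_m') = ((2m+1)(4m+3)u - 2m(2m+3)) S_m + 2m(2m+3) S_{m-1}`
together with `(2m+1) c_{m-1} = -2m c_m`, which comes from `Γ(x+1) = x Γ(x)`. Comparing
coefficients of `u^{i+1}`, the identity follows from the ratios `a_{m,i+1} / a_{m,i}` and
`a_{m-1,i+1} / a_{m,i}`, both rational in `i` and `m`.
-/

open Polynomial Nat

lemma poch_succ (a : ℝ) (n : ℕ) : poch a (n + 1) = poch a n * (a + n) :=
  ascPochhammer_succ_eval n a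

lemma poch_succ_eq_mul_poch_add_one (a : ℝ) (n : ℕ) : poch a (n + 1) = a * poch (a + 1) n := by
  simp [poch, ascPochhammer_succ_left, eval_comp]

lemma poch_one (n : ℕ) : poch 1 n = n ! := ascPochhammer_eval_one ℝ n

lemma poch_neg_natCast_of_lt {m n : ℕ} (h : m < n) : poch (-m) n = 0 :=
  ascPochhammer_eval_neg_coe_nat_of_lt h

noncomputable def jacobiCoeff (m i : ℕ) : ℝ :=
  poch (-(m : ℝ)) i * poch ((m : ℝ) + 5 / 2) i / (i ! : ℝ) ^ 2

lemma jacobiCoeff_zero_right (m : ℕ) : jacobiCoeff m 0 = 1 := by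
  simp [jacobiCoeff, poch]

lemma jacobiCoeff_of_lt {m i : ℕ} (h : m < i) : jacobiCoeff m i = 0 := by
  simp [jacobiCoeff, poch_neg_natCast_of_lt h]

lemma jacobiCoeff_succ_right (m i : ℕ) :
    jacobiCoeff m (i + 1) * ((i : ℝ) + 1) ^ 2 =
      jacobiCoeff m i * ((i : ℝ) - m) * (m + 5 / 2 + i) := by
  have hi : (i ! : ℝ) ≠ 0 := by positivity
  unfold jacobiCoeff
  rw [poch_succ, poch_succ, factorial_succ]
  push_cast
  field_simp
  ring

lemma jacobiCoeff_contiguous (k i : ℕ) :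
    ((k : ℝ) + 1) * jacobiCoeff k (i + 1) * ((i : ℝ) + 1) ^ 2 =
      jacobiCoeff (k + 1) i * ((k : ℝ) + 1 - i) * ((i : ℝ) - k) * (k + 5 / 2) := by
  have hi : (i ! : ℝ) ≠ 0 := by positivity
  have hshift :
      ((k : ℝ) + 1) * poch (-(k : ℝ)) i = poch (-((k : ℝ) + 1)) i * ((k : ℝ) + 1 - i) := by
    have h := poch_succ_eq_mul_poch_add_one (-((k : ℝ) + 1)) i
    rw [poch_succ, show -((k : ℝ) + 1) + 1 = -k by ring] at h
    linear_combination h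
  unfold jacobiCoeff
  rw [poch_succ (-(k : ℝ)), poch_succ_eq_mul_poch_add_one ((k : ℝ) + 5 / 2), factorial_succ]
  push_cast
  rw [show (k : ℝ) + 5 / 2 + 1 = (k : ℝ) + 1 + 5 / 2 by ring]
  generalize poch ((k : ℝ) + 1 + 5 / 2) i = q
  field_simp
  linear_combination ((i : ℝ) - k) * q * hshift

lemma jacobiCoeff_three_term (k j : ℕ) :
    (4 * ((k : ℝ) + 1) + 3) * ((2 * j + 1) * jacobiCoeff (k + 1) j
        - 2 * ((j : ℝ) + 1) * jacobiCoeff (k + 1) (j + 1)) =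
      (2 * ((k : ℝ) + 1) + 1) * (4 * ((k : ℝ) + 1) + 3) * jacobiCoeff (k + 1) j
        - 2 * ((k : ℝ) + 1) * (2 * ((k : ℝ) + 1) + 3) * jacobiCoeff (k + 1) (j + 1)
        + 2 * ((k : ℝ) + 1) * (2 * ((k : ℝ) + 1) + 3) * jacobiCoeff k (j + 1) := by
  have hratio := jacobiCoeff_succ_right (k + 1) j
  have hcontig := jacobiCoeff_contiguous k j
  push_cast at hratio
  refine mul_left_cancel₀ (by positivity : ((k : ℝ) + 1) * ((j : ℝ) + 1) ^ 2 ≠ 0) ?_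
  linear_combination ((k : ℝ) + 1) * (2 * ((k : ℝ) + 1) * (2 * ((k : ℝ) + 1) + 3)
      - 2 * (4 * ((k : ℝ) + 1) + 3) * ((j : ℝ) + 1)) * hratio
    - 2 * ((k : ℝ) + 1) * (2 * ((k : ℝ) + 1) + 3) * hcontig

noncomputable def jacobiPoly (m : ℕ) : ℝ[X] :=
  ∑ i ∈ range (m + 1), C (jacobiCoeff m i) * X ^ i

lemma coeff_jacobiPoly (m n : ℕ) : (jacobiPoly m).coeff n = jacobiCoeff m n := by
  simp only [jacobiPoly, finsetSum_coeff, coeff_C_mul_X_pow, Finset.sum_ite_eq, mem_range]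
  split_ifs with h
  · rfl
  · exact (jacobiCoeff_of_lt (by omega)).symm

lemma coeff_X_mul_derivative {R : Type*} [Semiring R] (p : R[X]) (n : ℕ) :
    (X * derivative p).coeff n = n * p.coeff n := by
  cases n with
  | zero => simp
  | succ n => rw [coeff_X_mul, coeff_derivative, ← Nat.cast_succ, Nat.cast_comm]

lemma jacobiPoly_succ_contiguous (k : ℕ) :
    C (4 * ((k : ℝ) + 1) + 3) *
        (X * jacobiPoly (k + 1) - 2 * X * (1 - X) * derivative (jacobiPoly (k + 1))) =
      C ((2 * ((k : ℝ) + 1) + 1) * (4 * ((k : ℝ) + 1) + 3)) * (X * jacobiPoly (k + 1))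
        - C (2 * ((k : ℝ) + 1) * (2 * ((k : ℝ) + 1) + 3)) * jacobiPoly (k + 1)
        + C (2 * ((k : ℝ) + 1) * (2 * ((k : ℝ) + 1) + 3)) * jacobiPoly k := by
  have hX : X * jacobiPoly (k + 1) - 2 * X * (1 - X) * derivative (jacobiPoly (k + 1)) =
      X * (jacobiPoly (k + 1) + 2 * (X * derivative (jacobiPoly (k + 1))))
        - 2 * (X * derivative (jacobiPoly (k + 1))) := by ring
  rw [hX]
  ext n
  cases n with
  | zero =>
    simp [coeff_jacobiPoly, jacobiCoeff_zero_right]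
  | succ j =>
    simp only [coeff_C_mul, coeff_add, coeff_sub, coeff_ofNat_mul, coeff_X_mul_derivative,
      coeff_X_mul, coeff_derivative, coeff_jacobiPoly]
    linear_combination jacobiCoeff_three_term k j

lemma jacobiP_zero_three_halves (m : ℕ) (x : ℝ) :
    jacobiP m 0 (3 / 2) x = (jacobiPoly m).eval ((1 - x) / 2) := by
  have hm : (m ! : ℝ) ≠ 0 := by positivity
  simp only [jacobiP, jacobiPoly, eval_finsetSum, eval_mul, eval_C, eval_pow, eval_X, zero_add,
    poch_one, div_self hm, one_mul, jacobiCoeff]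
  refine sum_congr rfl fun i _ => ?_
  rw [show (m : ℝ) + 0 + 3 / 2 + 1 = m + 5 / 2 by ring]
  ring

noncomputable def kmConst (m : ℕ) : ℝ :=
  (-1) ^ (m + 1) * (2 * Gamma ((m : ℝ) + 5 / 2) / (√π * Gamma ((m : ℝ) + 1)))

lemma km_eq (m : ℕ) : km m = fun t => kmConst m * t * (jacobiPoly m).eval (1 - t ^ 2) := by
  ext t
  rw [km, jacobiP_zero_three_halves, kmConst]
  ring_nf

lemma kmConst_succ (k : ℕ) :
    (2 * ((k : ℝ) + 1) + 3) * kmConst k = -(2 * ((k : ℝ) + 1)) * kmConst (k + 1) := by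
  have hnum : Gamma ((k : ℝ) + 5 / 2 + 1) = ((k : ℝ) + 5 / 2) * Gamma ((k : ℝ) + 5 / 2) :=
    Gamma_add_one (by positivity)
  have hden : Gamma ((k : ℝ) + 1 + 1) = ((k : ℝ) + 1) * Gamma ((k : ℝ) + 1) :=
    Gamma_add_one (by positivity)
  have hG : Gamma ((k : ℝ) + 1) ≠ 0 := (Gamma_pos_of_pos (by positivity)).ne'
  have hπ : √π ≠ 0 := (sqrt_pos.mpr pi_pos).ne'
  simp only [kmConst, Nat.cast_succ, pow_succ, add_right_comm _ (1 : ℝ) (5 / 2), hnum, hden]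
  field_simp
  ring

lemma hasDerivAt_km (m : ℕ) (t : ℝ) :
    HasDerivAt (km m) (kmConst m * ((jacobiPoly m).eval (1 - t ^ 2)
      - 2 * t ^ 2 * (derivative (jacobiPoly m)).eval (1 - t ^ 2))) t := by
  have hu : HasDerivAt (fun t : ℝ => 1 - t ^ 2) (-(2 * t)) t := by
    simpa using (hasDerivAt_pow 2 t).const_sub 1
  have hP := ((jacobiPoly m).hasDerivAt (1 - t ^ 2)).comp t hu
  rw [km_eq]
  refine (((hasDerivAt_id' t).const_mul (kmConst m)).mul hP).congr_deriv ?_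
  simp only [Function.comp_apply]
  ring

lemma km_succ_ode (k : ℕ) (t : ℝ) :
    t * (1 - t ^ 2) * deriv (km (k + 1)) t =
      ((4 * ((k + 1 : ℕ) : ℝ) ^ 2 + 4 * ((k + 1 : ℕ) : ℝ) + 3) / (4 * ((k + 1 : ℕ) : ℝ) + 3)
          - (2 * ((k + 1 : ℕ) : ℝ) + 1) * t ^ 2) * km (k + 1) t
        - (2 * ((k + 1 : ℕ) : ℝ) + 3) ^ 2 / (4 * ((k + 1 : ℕ) : ℝ) + 3) * km k t := by
  have hcont := congrArg (eval (1 - t ^ 2)) (jacobiPoly_succ_contiguous k)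
  simp only [eval_mul, eval_sub, eval_add, eval_C, eval_X, eval_ofNat, eval_one] at hcont
  rw [(hasDerivAt_km (k + 1) t).deriv, km_eq, km_eq]
  push_cast
  field_simp
  linear_combination t * kmConst (k + 1) * hcont
    + (2 * ((k : ℝ) + 1) + 3) * t * (jacobiPoly k).eval (1 - t ^ 2) * kmConst_succ k

theorem stmt12 (m : ℕ) (t : ℝ) :
    t * (1 - t^2) * deriv (km m) t =
      ((4*(m:ℝ)^2 + 4*(m:ℝ) + 3) / (4*(m:ℝ) + 3) - (2*(m:ℝ) + 1) * t^2) * km m t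
        - (2*(m:ℝ) + 3)^2 / (4*(m:ℝ) + 3) * kmZ ((m:ℤ) - 1) t := by
  cases m with
  | zero =>
    have hP : jacobiPoly 0 = 1 := by simp [jacobiPoly, jacobiCoeff_zero_right]
    rw [(hasDerivAt_km 0 t).deriv, km_eq, hP, kmZ, if_pos (by norm_num)]
    simp only [eval_one, derivative_one, eval_zero]
    ring
  | succ k =>
    rw [kmZ, if_neg (by omega), show ((k + 1 : ℕ) : ℤ) - 1 = k by push_cast; ring,
      Int.toNat_natCast]
    exact km_succ_ode k t
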